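/- arXiv:2002.11125 — 4 statements merged into one kernel-verified Lean document; each statement's English description precedes it below -/
import Mathlib

section
/- Let G be a group with elements r1, r2, r3 satisfying r1*r2*r1 = r2*r1*r2, r2*r3*r2 = r3*r2*r3, r1*r3 = r3*r1, r1^2 = r3^2, r1*r2*r3^2*r2*r1 = 1, and r3*r2*r1^2*r2*r3 = 1. Then (r1*r2*r3)^4 = 1. -/
/-- If elements `r1, r2, r3` of a group satisfy the braid relations
`r1*r2*r1 = r2*r1*r2`, `r2*r3*r2 = r3*r2*r3`, the commutation `r1*r3 = r3*r1`,
`r1^2 = r3^2`, together with `r1*r2*r3^2*r2*r1 = 1` and `r3*r2*r1^2*r2*r3 = 1`,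
then `(r1*r2*r3)^4 = 1`. -/
theorem braid_relations_imply_order_four {G : Type*} [Group G] (r1 r2 r3 : G)
    (h12 : r1 * r2 * r1 = r2 * r1 * r2)
    (h23 : r2 * r3 * r2 = r3 * r2 * r3)
    (h13 : r1 * r3 = r3 * r1)
    (hsq : r1 ^ 2 = r3 ^ 2)
    (h4 : r1 * r2 * r3 ^ 2 * r2 * r1 = 1)
    (h4' : r3 * r2 * r1 ^ 2 * r2 * r3 = 1) :
    (r1 * r2 * r3) ^ 4 = 1 := by
  have h13' : r3 * r1 = r1 * r3 := h13.symm
  have hsq' : r3 * r3 = r1 * r1 := by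
    have := hsq.symm; simpa [pow_two] using this
  have hinv : (r1 * r2 * r3) * (r3 * r2 * r1) = 1 := by
    rw [← h4]; simp only [pow_two, mul_assoc]
  have hinv' : (r3 * r2 * r1) * (r1 * r2 * r3) = 1 := by
    rw [← h4']; simp only [pow_two, mul_assoc]
  have e : (r1*r2*r3) * (r1*r2*r3) = (r3*r2*r1) * (r3*r2*r1) := by
    calc (r1*r2*r3) * (r1*r2*r3)
        = r1*r2*(r3*r1)*(r2*r3) := by group
      _ = r1*r2*(r1*r3)*(r2*r3) := by rw [h13']
      _ = (r1*r2*r1)*(r3*r2*r3) := by group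
      _ = (r2*r1*r2)*(r3*r2*r3) := by rw [h12]
      _ = r2*r1*(r2*r3*r2)*r3 := by group
      _ = r2*r1*(r3*r2*r3)*r3 := by rw [h23]
      _ = r2*(r1*r3)*r2*(r3*r3) := by group
      _ = r2*(r3*r1)*r2*(r1*r1) := by rw [← h13', hsq']
      _ = r2*r3*(r1*r2*r1)*r1 := by group
      _ = r2*r3*(r2*r1*r2)*r1 := by rw [h12]
      _ = (r2*r3*r2)*(r1*r2*r1) := by group
      _ = (r3*r2*r3)*(r1*r2*r1) := by rw [h23]
      _ = r3*r2*(r3*r1)*(r2*r1) := by group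
      _ = r3*r2*(r1*r3)*(r2*r1) := by rw [h13']
      _ = (r3*r2*r1) * (r3*r2*r1) := by group
  calc (r1*r2*r3)^4
      = (r1*r2*r3) * ((r1*r2*r3)*(r1*r2*r3)) * (r1*r2*r3) := by simp only [pow_succ, pow_zero, one_mul, mul_assoc]
    _ = (r1*r2*r3) * ((r3*r2*r1)*(r3*r2*r1)) * (r1*r2*r3) := by rw [e]
    _ = ((r1*r2*r3)*(r3*r2*r1)) * ((r3*r2*r1)*(r1*r2*r3)) := by group
    _ = 1 := by rw [hinv, hinv', mul_one]
end

section
/- In the semidirect product (Z/2 × Z/2) ⋊ PSL_2(Z), with multiplication (u,A)(v,B) = (u + A·v, A·B) where PSL_2(Z) acts on (Z/2)^2 by reduction of matrices mod 2, the elements s1 = ((0,0), [[1,1],[0,1]]), s2 = ((0,1), [[1,0],[-1,1]]), s3 = ((1,0), [[1,1],[0,1]]) satisfy the braid relations s1 s2 s1 = s2 s1 s2, s2 s3 s2 = s3 s2 s3, s1 s3 = s3 s1, as well as s1 s2 s3^2 s2 s1 = 1 and (s1 s2 s3)^4 = 1. -/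
/-- `SL(2, ℤ)`. -/
abbrev SL2Z := Matrix.SpecialLinearGroup (Fin 2) ℤ

/-- The element `-I` of `SL(2, ℤ)`. -/
def negOne : SL2Z := ⟨!![-1, 0; 0, -1], by norm_num [Matrix.det_fin_two_of]⟩

lemma negOne_mem_center : negOne ∈ Subgroup.center SL2Z := by
  rw [Subgroup.mem_center_iff]
  intro g
  apply Subtype.ext
  show (g : Matrix (Fin 2) (Fin 2) ℤ) * negOne = (negOne : Matrix (Fin 2) (Fin 2) ℤ) * g
  ext i j
  fin_cases i <;> fin_cases j <;>
    simp [negOne, Matrix.mul_apply, Fin.sum_univ_succ]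

instance : (Subgroup.zpowers negOne).Normal := by
  constructor
  intro x hx g
  obtain ⟨k, rfl⟩ := hx
  have hc : Commute g negOne := Subgroup.mem_center_iff.mp negOne_mem_center g
  show g * negOne ^ k * g⁻¹ ∈ Subgroup.zpowers negOne
  have h : g * negOne ^ k * g⁻¹ = negOne ^ k := by
    rw [(hc.zpow_right k).eq, mul_assoc, mul_inv_cancel, mul_one]
  rw [h]
  exact ⟨k, rfl⟩

/-- `PSL(2, ℤ) = SL(2, ℤ)/{±I}`. -/
abbrev PSL2Z := SL2Z ⧸ Subgroup.zpowers negOne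

/-- Reduction mod 2, `SL(2, ℤ) →* SL(2, ℤ/2)`. -/
def redMod2 : SL2Z →* Matrix.SpecialLinearGroup (Fin 2) (ZMod 2) :=
  Matrix.SpecialLinearGroup.map (Int.castRingHom (ZMod 2))

/-- Linear automorphisms as additive automorphisms. -/
def linToAddAut :
    ((Fin 2 → ZMod 2) ≃ₗ[ZMod 2] (Fin 2 → ZMod 2)) →* Multiplicative (AddAut (Fin 2 → ZMod 2)) :=
  MonoidHom.mk' (fun e => Multiplicative.ofAdd e.toAddEquiv) (fun _ _ => rfl)

/-- Additive automorphisms of `(ℤ/2)²` as multiplicative automorphisms of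
`Multiplicative ((ℤ/2)²)`. -/
def addAutToMulAut :
    Multiplicative (AddAut (Fin 2 → ZMod 2)) →* MulAut (Multiplicative (Fin 2 → ZMod 2)) :=
  MonoidHom.mk' (fun e => AddEquiv.toMultiplicative (Multiplicative.toAdd e)) (fun _ _ => rfl)

/-- The action of `SL(2, ℤ)` on `(ℤ/2)²` (written multiplicatively) by matrix-vector
multiplication after reduction mod 2. -/
def actSL : SL2Z →* MulAut (Multiplicative (Fin 2 → ZMod 2)) :=
  (addAutToMulAut.comp linToAddAut).comp
    (Matrix.SpecialLinearGroup.toLin'.comp redMod2)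

lemma redMod2_negOne : redMod2 negOne = 1 := by
  apply Subtype.ext
  show (negOne : Matrix (Fin 2) (Fin 2) ℤ).map (Int.castRingHom (ZMod 2)) = 1
  ext i j
  fin_cases i <;> fin_cases j <;> simp [negOne] <;> decide

lemma actSL_negOne : ∀ x ∈ Subgroup.zpowers negOne, actSL x = 1 := by
  intro x hx
  obtain ⟨k, rfl⟩ := hx
  have h1 : actSL negOne = 1 := by
    simp [actSL, redMod2_negOne]
  show actSL (negOne ^ k) = 1
  rw [map_zpow, h1, one_zpow]

/-- The action of `PSL₂(ℤ)` on `(ℤ/2)²` (written multiplicatively) by matrix-vector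
multiplication after reduction mod 2; this is well-defined since `-I` acts trivially mod 2. -/
def actPSL : PSL2Z →* MulAut (Multiplicative (Fin 2 → ZMod 2)) :=
  QuotientGroup.lift (Subgroup.zpowers negOne) actSL actSL_negOne

/-- The semidirect product `(ℤ/2 × ℤ/2) ⋊ PSL₂(ℤ)`, with multiplication
`(u, A)(v, B) = (u + A·v, A·B)` where `PSL₂(ℤ)` acts on `(ℤ/2)²` by reduction of matrices
mod 2. -/
abbrev SDP := SemidirectProduct (Multiplicative (Fin 2 → ZMod 2)) PSL2Z actPSL

/-- `s1 = ((0,0), [[1,1],[0,1]])`. -/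
def s1 : SDP :=
  ⟨Multiplicative.ofAdd ![0, 0],
   QuotientGroup.mk ⟨!![1, 1; 0, 1], by norm_num [Matrix.det_fin_two_of]⟩⟩

/-- `s2 = ((0,1), [[1,0],[-1,1]])`. -/
def s2 : SDP :=
  ⟨Multiplicative.ofAdd ![0, 1],
   QuotientGroup.mk ⟨!![1, 0; -1, 1], by norm_num [Matrix.det_fin_two_of]⟩⟩

/-- `s3 = ((1,0), [[1,1],[0,1]])`. -/
def s3 : SDP :=
  ⟨Multiplicative.ofAdd ![1, 0],
   QuotientGroup.mk ⟨!![1, 1; 0, 1], by norm_num [Matrix.det_fin_two_of]⟩⟩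

/-- In `(ℤ/2 × ℤ/2) ⋊ PSL₂(ℤ)`, the elements `s1, s2, s3` satisfy the braid relations
`s1 s2 s1 = s2 s1 s2`, `s2 s3 s2 = s3 s2 s3`, `s1 s3 = s3 s1`, as well as
`s1 s2 s3² s2 s1 = 1` and `(s1 s2 s3)⁴ = 1`. -/
theorem sdp_braid_relations :
    s1 * s2 * s1 = s2 * s1 * s2 ∧ s2 * s3 * s2 = s3 * s2 * s3 ∧ s1 * s3 = s3 * s1 ∧
      s1 * s2 * s3 ^ 2 * s2 * s1 = 1 ∧ (s1 * s2 * s3) ^ 4 = 1 := by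
  have hmul : ∀ (u v : Fin 2 → ZMod 2) (A B : SL2Z),
      (⟨Multiplicative.ofAdd u, QuotientGroup.mk A⟩ : SDP) *
        ⟨Multiplicative.ofAdd v, QuotientGroup.mk B⟩ =
      ⟨Multiplicative.ofAdd (u + Matrix.mulVec
          ((A : Matrix (Fin 2) (Fin 2) ℤ).map (Int.cast : ℤ → ZMod 2)) v),
        QuotientGroup.mk (A * B)⟩ := by
    intro u v A B
    apply SemidirectProduct.ext
    · show Multiplicative.ofAdd u * actPSL (QuotientGroup.mk A) (Multiplicative.ofAdd v) = _
      rfl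
    · rfl
  have hmk : ∀ (P Q : SL2Z), (P : Matrix (Fin 2) (Fin 2) ℤ) = Q →
      (QuotientGroup.mk P : PSL2Z) = QuotientGroup.mk Q := by
    intro P Q h
    exact congrArg _ (Subtype.ext h)
  have hneg : ∀ (P : SL2Z), (P : Matrix (Fin 2) (Fin 2) ℤ) = !![-1,0;0,-1] →
      (QuotientGroup.mk P : PSL2Z) = 1 := by
    intro P h
    have : P = negOne := Subtype.ext (by rw [h]; rfl)
    rw [this]
    exact (QuotientGroup.eq_one_iff _).mpr (Subgroup.mem_zpowers _)
  refine ⟨?_, ?_, ?_, ?_, ?_⟩ <;>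
    simp only [s1, s2, s3, pow_succ, pow_one, hmul] <;>
    apply SemidirectProduct.ext
  · decide
  · apply hmk; decide
  · decide
  · apply hmk; decide
  · decide
  · apply hmk; decide
  · decide
  · apply hneg; decide
  · decide
  · apply hmk; decide
end

section
/- The group PΓ(2) = Γ(2)/{±I} is generated by the images of the matrices [[1,2],[0,1]] and [[1,0],[-2,1]]. -/
/-- The matrix `[[1, 2], [0, 1]]` as an element of `SL(2, ℤ)`. -/
def T2mat : SL2Z := ⟨!![1, 2; 0, 1], by norm_num [Matrix.det_fin_two_of]⟩

/-- The matrix `[[1, 0], [-2, 1]]` as an element of `SL(2, ℤ)`. -/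
def U2mat : SL2Z := ⟨!![1, 0; -2, 1], by norm_num [Matrix.det_fin_two_of]⟩

/-- `PΓ(2) = Γ(2)/{±I}`, the image of the principal congruence subgroup `Γ(2)` in `PSL(2, ℤ)`. -/
def PGammaTwo : Subgroup PSL2Z :=
  (CongruenceSubgroup.Gamma 2).map (QuotientGroup.mk' (Subgroup.zpowers negOne))


open Subgroup CongruenceSubgroup

/-- Inverse of `T2mat`. -/
def PGT2inv : SL2Z := ⟨!![1, -2; 0, 1], by norm_num [Matrix.det_fin_two_of]⟩
/-- Inverse of `U2mat`. -/
def PGU2inv : SL2Z := ⟨!![1, 0; 2, 1], by norm_num [Matrix.det_fin_two_of]⟩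

lemma PG_coe_T2_mul (g : SL2Z) : (T2mat * g).1 =
    !![g.1 0 0 + 2 * g.1 1 0, g.1 0 1 + 2 * g.1 1 1; g.1 1 0, g.1 1 1] := by
  show T2mat.1 * g.1 = _
  ext i j
  fin_cases i <;> fin_cases j <;>
    (simp [T2mat, Matrix.mul_apply, Fin.sum_univ_succ]; try ring)

lemma PG_coe_T2inv_mul (g : SL2Z) : (PGT2inv * g).1 =
    !![g.1 0 0 - 2 * g.1 1 0, g.1 0 1 - 2 * g.1 1 1; g.1 1 0, g.1 1 1] := by
  show PGT2inv.1 * g.1 = _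
  ext i j
  fin_cases i <;> fin_cases j <;>
    (simp [PGT2inv, Matrix.mul_apply, Fin.sum_univ_succ]; try ring)

lemma PG_coe_U2_mul (g : SL2Z) : (U2mat * g).1 =
    !![g.1 0 0, g.1 0 1; g.1 1 0 - 2 * g.1 0 0, g.1 1 1 - 2 * g.1 0 1] := by
  show U2mat.1 * g.1 = _
  ext i j
  fin_cases i <;> fin_cases j <;>
    (simp [U2mat, Matrix.mul_apply, Fin.sum_univ_succ]; try ring)

lemma PG_coe_U2inv_mul (g : SL2Z) : (PGU2inv * g).1 =
    !![g.1 0 0, g.1 0 1; g.1 1 0 + 2 * g.1 0 0, g.1 1 1 + 2 * g.1 0 1] := by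
  show PGU2inv.1 * g.1 = _
  ext i j
  fin_cases i <;> fin_cases j <;>
    (simp [PGU2inv, Matrix.mul_apply, Fin.sum_univ_succ]; try ring)

lemma PG_T2_mem : T2mat ∈ Gamma 2 := by
  rw [Gamma_mem]
  refine ⟨?_, ?_, ?_, ?_⟩ <;> (simp [T2mat]; try decide)

lemma PG_U2_mem : U2mat ∈ Gamma 2 := by
  rw [Gamma_mem]
  refine ⟨?_, ?_, ?_, ?_⟩ <;> (simp [U2mat]; try decide)

lemma PG_T2inv_mem : PGT2inv ∈ Gamma 2 := by
  rw [Gamma_mem]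
  refine ⟨?_, ?_, ?_, ?_⟩ <;> (simp [PGT2inv]; try decide)

lemma PG_U2inv_mem : PGU2inv ∈ Gamma 2 := by
  rw [Gamma_mem]
  refine ⟨?_, ?_, ?_, ?_⟩ <;> (simp [PGU2inv]; try decide)

lemma PG_T2inv_mul_T2 : PGT2inv * T2mat = 1 := by
  apply Subtype.ext
  show PGT2inv.1 * T2mat.1 = (1 : Matrix (Fin 2) (Fin 2) ℤ)
  ext i j
  fin_cases i <;> fin_cases j <;>
    simp [T2mat, PGT2inv, Matrix.mul_apply, Fin.sum_univ_succ, Matrix.one_apply]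

lemma PG_U2inv_mul_U2 : PGU2inv * U2mat = 1 := by
  apply Subtype.ext
  show PGU2inv.1 * U2mat.1 = (1 : Matrix (Fin 2) (Fin 2) ℤ)
  ext i j
  fin_cases i <;> fin_cases j <;>
    simp [U2mat, PGU2inv, Matrix.mul_apply, Fin.sum_univ_succ, Matrix.one_apply]

/-- The closure subgroup. -/
def PGH : Subgroup PSL2Z :=
  Subgroup.closure {(QuotientGroup.mk T2mat : PSL2Z), (QuotientGroup.mk U2mat : PSL2Z)}

lemma PG_T2_in : (QuotientGroup.mk T2mat : PSL2Z) ∈ PGH :=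
  Subgroup.subset_closure (Set.mem_insert _ _)

lemma PG_U2_in : (QuotientGroup.mk U2mat : PSL2Z) ∈ PGH :=
  Subgroup.subset_closure (Set.mem_insert_of_mem _ rfl)

lemma PG_inv_in {w winv : SL2Z} (h : winv * w = 1)
    (hw : (QuotientGroup.mk w : PSL2Z) ∈ PGH) : (QuotientGroup.mk winv : PSL2Z) ∈ PGH := by
  have he : (QuotientGroup.mk winv : PSL2Z) = (QuotientGroup.mk w : PSL2Z)⁻¹ := by
    apply eq_inv_of_mul_eq_one_left
    rw [← QuotientGroup.mk_mul, h, QuotientGroup.mk_one]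
  rw [he]
  exact inv_mem hw

lemma PG_T2inv_in : (QuotientGroup.mk PGT2inv : PSL2Z) ∈ PGH :=
  PG_inv_in PG_T2inv_mul_T2 PG_T2_in

lemma PG_U2inv_in : (QuotientGroup.mk PGU2inv : PSL2Z) ∈ PGH :=
  PG_inv_in PG_U2inv_mul_U2 PG_U2_in

lemma PG_step (w : SL2Z) {g : SL2Z} (hw : (QuotientGroup.mk w : PSL2Z) ∈ PGH)
    (h : (QuotientGroup.mk (w * g) : PSL2Z) ∈ PGH) : (QuotientGroup.mk g : PSL2Z) ∈ PGH := by
  have he : (QuotientGroup.mk g : PSL2Z)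
      = (QuotientGroup.mk w : PSL2Z)⁻¹ * QuotientGroup.mk (w * g) := by
    rw [QuotientGroup.mk_mul, inv_mul_cancel_left]
  rw [he]
  exact mul_mem (inv_mem hw) h

lemma PG_gamma2_parity {g : SL2Z} (hg : g ∈ Gamma 2) :
    ¬(2 ∣ g.1 0 0) ∧ 2 ∣ g.1 0 1 ∧ 2 ∣ g.1 1 0 ∧ ¬(2 ∣ g.1 1 1) := by
  rw [Gamma_mem] at hg
  obtain ⟨h1, h2, h3, h4⟩ := hg
  refine ⟨fun h => ?_, ?_, ?_, fun h => ?_⟩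
  · rw [(ZMod.intCast_zmod_eq_zero_iff_dvd _ 2).2 (by exact_mod_cast h)] at h1
    exact absurd h1 (by decide)
  · exact_mod_cast (ZMod.intCast_zmod_eq_zero_iff_dvd _ 2).1 h2
  · exact_mod_cast (ZMod.intCast_zmod_eq_zero_iff_dvd _ 2).1 h3
  · rw [(ZMod.intCast_zmod_eq_zero_iff_dvd _ 2).2 (by exact_mod_cast h)] at h4
    exact absurd h4 (by decide)

lemma PG_b0 (g : SL2Z) (hc : g.1 1 0 = 0) (hb : g.1 0 1 = 0)
    (h : (g.1 0 0 = 1 ∧ g.1 1 1 = 1) ∨ (g.1 0 0 = -1 ∧ g.1 1 1 = -1)) :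
    (QuotientGroup.mk g : PSL2Z) ∈ PGH := by
  rcases h with ⟨ha, hd⟩ | ⟨ha, hd⟩
  · have hg1 : g = 1 := by
      apply Subtype.ext
      show g.1 = (1 : Matrix (Fin 2) (Fin 2) ℤ)
      ext i j
      fin_cases i <;> fin_cases j <;> simp [ha, hb, hc, hd, Matrix.one_apply]
    rw [hg1, QuotientGroup.mk_one]
    exact one_mem _
  · have hg1 : g = negOne := by
      apply Subtype.ext
      show g.1 = negOne.1
      ext i j
      fin_cases i <;> fin_cases j <;> simp [ha, hb, hc, hd, negOne]
    rw [hg1, (QuotientGroup.eq_one_iff negOne).2 (Subgroup.mem_zpowers negOne)]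
    exact one_mem _

lemma PG_aux0 : ∀ n : ℕ, ∀ g : SL2Z, g ∈ Gamma 2 → g.1 1 0 = 0 →
    (g.1 0 1).natAbs ≤ n → (QuotientGroup.mk g : PSL2Z) ∈ PGH := by
  intro n
  induction n with
  | zero =>
    intro g hg hc hb
    have hdet := g.2
    rw [Matrix.det_fin_two, hc] at hdet
    simp only [mul_zero, sub_zero] at hdet
    exact PG_b0 g hc (by omega) (Int.mul_eq_one_iff_eq_one_or_neg_one.1 hdet)
  | succ n ih =>
    intro g hg hc hb
    have hdet := g.2
    rw [Matrix.det_fin_two, hc] at hdet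
    simp only [mul_zero, sub_zero] at hdet
    have had := Int.mul_eq_one_iff_eq_one_or_neg_one.1 hdet
    by_cases hb0 : g.1 0 1 = 0
    · exact PG_b0 g hc hb0 had
    · obtain ⟨-, hB, -, -⟩ := PG_gamma2_parity hg
      have hd : g.1 1 1 = 1 ∨ g.1 1 1 = -1 := by rcases had with ⟨_, h⟩ | ⟨_, h⟩ <;> [left; right] <;> exact h
      have key : (g.1 0 1 + 2 * g.1 1 1).natAbs ≤ n ∨ (g.1 0 1 - 2 * g.1 1 1).natAbs ≤ n := by
        rcases hd with h | h <;> omega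
      rcases key with key | key
      · refine PG_step T2mat PG_T2_in (ih (T2mat * g) (mul_mem PG_T2_mem hg) ?_ ?_)
        · rw [PG_coe_T2_mul]; simpa using hc
        · rw [PG_coe_T2_mul]; simpa using key
      · refine PG_step PGT2inv PG_T2inv_in (ih (PGT2inv * g) (mul_mem PG_T2inv_mem hg) ?_ ?_)
        · rw [PG_coe_T2inv_mul]; simpa using hc
        · rw [PG_coe_T2inv_mul]; simpa using key

lemma PG_aux1 : ∀ n : ℕ, ∀ g : SL2Z, g ∈ Gamma 2 →
    (g.1 0 0).natAbs + (g.1 1 0).natAbs ≤ n → (QuotientGroup.mk g : PSL2Z) ∈ PGH := by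
  intro n
  induction n with
  | zero =>
    intro g hg hn
    obtain ⟨hA, -, -, -⟩ := PG_gamma2_parity hg
    exact absurd (show (2:ℤ) ∣ g.1 0 0 by omega) hA
  | succ n ih =>
    intro g hg hn
    rcases eq_or_ne (g.1 1 0) 0 with hc | hc
    · exact PG_aux0 _ g hg hc le_rfl
    · obtain ⟨hA, -, hC, -⟩ := PG_gamma2_parity hg
      rcases lt_or_gt_of_ne (show (g.1 0 0).natAbs ≠ (g.1 1 0).natAbs by omega) with h | h
      · -- |a| < |c| : reduce c using U2
        have key : (g.1 1 0 - 2 * g.1 0 0).natAbs + (g.1 0 0).natAbs ≤ n ∨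
            (g.1 1 0 + 2 * g.1 0 0).natAbs + (g.1 0 0).natAbs ≤ n := by omega
        rcases key with key | key
        · refine PG_step U2mat PG_U2_in (ih (U2mat * g) (mul_mem PG_U2_mem hg) ?_)
          rw [PG_coe_U2_mul]; simpa using by omega
        · refine PG_step PGU2inv PG_U2inv_in (ih (PGU2inv * g) (mul_mem PG_U2inv_mem hg) ?_)
          rw [PG_coe_U2inv_mul]; simpa using by omega
      · -- |c| < |a| : reduce a using T2
        have key : (g.1 0 0 + 2 * g.1 1 0).natAbs + (g.1 1 0).natAbs ≤ n ∨
            (g.1 0 0 - 2 * g.1 1 0).natAbs + (g.1 1 0).natAbs ≤ n := by omega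
        rcases key with key | key
        · refine PG_step T2mat PG_T2_in (ih (T2mat * g) (mul_mem PG_T2_mem hg) ?_)
          rw [PG_coe_T2_mul]; simpa using key
        · refine PG_step PGT2inv PG_T2inv_in (ih (PGT2inv * g) (mul_mem PG_T2inv_mem hg) ?_)
          rw [PG_coe_T2inv_mul]; simpa using key

/-- `PΓ(2)` is generated by the images of the matrices `[[1,2],[0,1]]` and `[[1,0],[-2,1]]`. -/
theorem PGamma2_generated :
    Subgroup.closure {(QuotientGroup.mk T2mat : PSL2Z), (QuotientGroup.mk U2mat : PSL2Z)}
      = PGammaTwo := by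
  apply le_antisymm
  · rw [Subgroup.closure_le]
    rintro x hx
    rcases hx with rfl | rfl
    · exact ⟨T2mat, PG_T2_mem, rfl⟩
    · exact ⟨U2mat, PG_U2_mem, rfl⟩
  · rintro x ⟨g, hg, rfl⟩
    exact PG_aux1 _ g hg le_rfl
end

section
/- For all τ in the upper half-plane, θ_2(τ)^4 + θ_4(τ)^4 = θ_3(τ)^4, where θ_2(τ) = Σ_{n∈Z} q^{(n+1/2)^2/2}, θ_3(τ) = Σ_{n∈Z} q^{n^2/2}, θ_4(τ) = Σ_{n∈Z} (−1)^n q^{n^2/2}, with q = exp(2πiτ). -/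
open Complex

/-- The Jacobi theta function `θ₂(τ) = Σ_{n ∈ ℤ} q^{(n+1/2)²/2}`, with `q = exp(2πiτ)`. -/
noncomputable def theta2 (τ : ℂ) : ℂ :=
  ∑' n : ℤ, Complex.exp (Real.pi * Complex.I * τ * ((n : ℂ) + 1 / 2) ^ 2)

/-- The Jacobi theta function `θ₃(τ) = Σ_{n ∈ ℤ} q^{n²/2}`, with `q = exp(2πiτ)`. -/
noncomputable def theta3 (τ : ℂ) : ℂ :=
  ∑' n : ℤ, Complex.exp (Real.pi * Complex.I * τ * (n : ℂ) ^ 2)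

/-- The Jacobi theta function `θ₄(τ) = Σ_{n ∈ ℤ} (−1)ⁿ q^{n²/2}`, with `q = exp(2πiτ)`. -/
noncomputable def theta4 (τ : ℂ) : ℂ :=
  ∑' n : ℤ, (-1 : ℂ) ^ n * Complex.exp (Real.pi * Complex.I * τ * (n : ℂ) ^ 2)

/-!
Expanding the fourth powers as series over `ℤ⁴` gives
`θ₃⁴ - θ₄⁴ = 2 Σ_{z ∈ ℤ⁴, Σ zᵢ odd} q^{|z|²/2}` and `θ₂⁴ = Σ_{y ∈ (ℤ + ½)⁴} q^{|y|²/2}`.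
The reflection `y₁ ↦ -y₁` exchanges the half-integral `y` with `Σ yᵢ` even and those with `Σ yᵢ`
odd, and the orthogonal Hadamard matrix
`H = ½ [[1,1,1,1],[1,1,-1,-1],[1,-1,1,-1],[1,-1,-1,1]]` maps the
half-integral `y` with `Σ yᵢ` even bijectively onto the integral `z` with `Σ zᵢ` odd. Hence
`θ₂⁴ = 2 Σ_{Σ zᵢ odd} q^{|z|²/2}` as well.
-/

theorem hasSum_pow_four {ι R : Type*} [NormedRing R] [CompleteSpace R] {f : ι → R}
    (hf : Summable fun i => ‖f i‖) :
    HasSum (fun p : (ι × ι) × ι × ι => f p.1.1 * f p.1.2 * (f p.2.1 * f p.2.2))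
      ((∑' i, f i) ^ 4) := by
  have hf2 : Summable fun p : ι × ι => ‖f p.1 * f p.2‖ := hf.mul_norm hf
  convert (summable_mul_of_summable_norm hf2 hf2).hasSum using 1
  rw [← tsum_mul_tsum_of_summable_norm hf2 hf2, ← tsum_mul_tsum_of_summable_norm hf hf]
  noncomm_ring

theorem tsum_sub_tsum_neg_one_zpow_mul {ι 𝕜 : Type*} [DivisionRing 𝕜] [TopologicalSpace 𝕜]
    [IsTopologicalRing 𝕜] [T2Space 𝕜] (s : ι → ℤ) {f : ι → 𝕜} (hf : Summable f)
    (hg : Summable fun i => (-1 : 𝕜) ^ s i * f i) :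
    ∑' i, f i - ∑' i, (-1 : 𝕜) ^ s i * f i = 2 * ∑' i : {i | Odd (s i)}, f i := by
  have h (i : ι) : f i - (-1 : 𝕜) ^ s i * f i = 2 * {i | Odd (s i)}.indicator f i := by
    rcases Int.even_or_odd (s i) with he | ho
    · simp [he.neg_one_zpow, Int.not_odd_iff_even.mpr he]
    · simp [ho.neg_one_zpow, ho, two_mul]
  rw [← hf.tsum_sub hg, tsum_congr h, tsum_mul_left, tsum_subtype]

/-- Integer vectors in `ℤ⁴`, nested as the index set of a product of two products of series. -/
abbrev Quad : Type := (ℤ × ℤ) × ℤ × ℤ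

namespace Quad

def sum (p : Quad) : ℤ := p.1.1 + p.1.2 + p.2.1 + p.2.2

def sumSq (p : Quad) : ℤ := p.1.1 ^ 2 + p.1.2 ^ 2 + p.2.1 ^ 2 + p.2.2 ^ 2

/-- `x ↦ H (x + ½)`, with `H` the Hadamard matrix of the header; as `H² = 1`, the inverse is
`z ↦ H z - ½`. -/
def hadamardShift : {x : Quad | Even x.sum} ≃ {z : Quad | Odd z.sum} where
  toFun x := ⟨((x.1.sum / 2 + 1, (x.1.1.1 + x.1.1.2 - x.1.2.1 - x.1.2.2) / 2),
      ((x.1.1.1 - x.1.1.2 + x.1.2.1 - x.1.2.2) / 2, (x.1.1.1 - x.1.1.2 - x.1.2.1 + x.1.2.2) / 2)), by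
    obtain ⟨⟨⟨a, b⟩, c, d⟩, h⟩ := x
    simp only [Set.mem_ofPred_eq, sum, Int.even_iff, Int.odd_iff] at h ⊢
    omega⟩
  invFun z := ⟨(((z.1.sum - 1) / 2, (z.1.1.1 + z.1.1.2 - z.1.2.1 - z.1.2.2 - 1) / 2),
      ((z.1.1.1 - z.1.1.2 + z.1.2.1 - z.1.2.2 - 1) / 2,
        (z.1.1.1 - z.1.1.2 - z.1.2.1 + z.1.2.2 - 1) / 2)), by
    obtain ⟨⟨⟨a, b⟩, c, d⟩, h⟩ := z
    simp only [Set.mem_ofPred_eq, sum, Int.even_iff, Int.odd_iff] at h ⊢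
    omega⟩
  left_inv := by
    rintro ⟨⟨⟨a, b⟩, c, d⟩, h⟩
    simp only [Set.mem_ofPred_eq, sum, Int.even_iff] at h
    apply Subtype.ext
    simp only [sum, Prod.mk.injEq]
    omega
  right_inv := by
    rintro ⟨⟨⟨a, b⟩, c, d⟩, h⟩
    simp only [Set.mem_ofPred_eq, sum, Int.odd_iff] at h
    apply Subtype.ext
    simp only [sum, Prod.mk.injEq]
    omega

theorem sumSq_two_mul_hadamardShift (x : {x : Quad | Even x.sum}) :
    sumSq (2 * (hadamardShift x : Quad)) = sumSq (2 * (x : Quad) + 1) := by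
  obtain ⟨⟨⟨a, b⟩, c, d⟩, h⟩ := x
  simp only [Set.mem_ofPred_eq, sum, Int.even_iff] at h
  simp only [hadamardShift, Equiv.coe_fn_mk]
  simp only [sumSq, sum, Prod.fst_mul, Prod.snd_mul, Prod.fst_add, Prod.snd_add, Prod.fst_ofNat,
    Prod.snd_ofNat, Prod.fst_one, Prod.snd_one]
  have h₁ : 2 * ((a + b + c + d) / 2 + 1) = a + b + c + d + 2 := by omega
  have h₂ : 2 * ((a + b - c - d) / 2) = a + b - c - d := by omega
  have h₃ : 2 * ((a - b + c - d) / 2) = a - b + c - d := by omega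
  have h₄ : 2 * ((a - b - c + d) / 2) = a - b - c + d := by omega
  rw [h₁, h₂, h₃, h₄]
  ring

/-- The reflection `y₁ ↦ -y₁` of `y = x + ½`. -/
def reflectFirst (p : Quad) : Quad := ((-1 - p.1.1, p.1.2), p.2)

theorem reflectFirst_involutive : Function.Involutive reflectFirst := fun p => by
  simp [reflectFirst]

theorem sumSq_two_mul_reflectFirst_add_one (x : Quad) :
    sumSq (2 * reflectFirst x + 1) = sumSq (2 * x + 1) := by
  simp only [reflectFirst, sumSq, Prod.fst_mul, Prod.snd_mul, Prod.fst_add, Prod.snd_add,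
    Prod.fst_ofNat, Prod.snd_ofNat, Prod.fst_one, Prod.snd_one]
  ring

theorem not_even_sum_reflectFirst_iff (x : Quad) : ¬ Even (reflectFirst x).sum ↔ Even x.sum := by
  simp only [reflectFirst, sum, Int.even_iff]
  omega

theorem tsum_sumSq_two_mul_add_one {E : Type*} [NormedAddCommGroup E] [CompleteSpace E]
    {f : ℤ → E} (hf : Summable fun x : Quad => f (sumSq (2 * x + 1))) :
    ∑' x : Quad, f (sumSq (2 * x + 1)) = 2 • ∑' z : {z : Quad | Odd z.sum}, f (sumSq (2 * z)) := by
  set s : Set Quad := {x | Even x.sum}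
  have hreflect : ∑' x : ↥(sᶜ), f (sumSq (2 * x + 1)) = ∑' x : s, f (sumSq (2 * x + 1)) := by
    rw [← ((reflectFirst_involutive.toPerm _).subtypeEquiv
      fun x => (not_even_sum_reflectFirst_iff x).symm).tsum_eq]
    exact tsum_congr fun x => congrArg f (sumSq_two_mul_reflectFirst_add_one x)
  have hhadamard :
      ∑' x : s, f (sumSq (2 * x + 1)) = ∑' z : {z : Quad | Odd z.sum}, f (sumSq (2 * z)) := by
    rw [← hadamardShift.tsum_eq]
    exact tsum_congr fun x => congrArg f (sumSq_two_mul_hadamardShift x).symm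
  rw [← hf.tsum_subtype_add_tsum_subtype_compl s, hreflect, two_nsmul, hhadamard]

end Quad

/-- `thetaExp τ m = q^{m/8}`, so that the terms of `θ₃` and `θ₂` at `n` are
`thetaExp τ ((2n)²)` and `thetaExp τ ((2n+1)²)`, with integral exponents. -/
noncomputable def thetaExp (τ : ℂ) (m : ℤ) : ℂ := cexp (Real.pi * I * τ * m / 4)

theorem thetaExp_add (τ : ℂ) (m n : ℤ) : thetaExp τ (m + n) = thetaExp τ m * thetaExp τ n := by
  rw [thetaExp, thetaExp, thetaExp, ← Complex.exp_add]
  push_cast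
  ring_nf

theorem thetaExp_sumSq (τ : ℂ) (v : Quad) :
    thetaExp τ v.sumSq = thetaExp τ (v.1.1 ^ 2) * thetaExp τ (v.1.2 ^ 2) *
      (thetaExp τ (v.2.1 ^ 2) * thetaExp τ (v.2.2 ^ 2)) := by
  rw [Quad.sumSq, thetaExp_add, thetaExp_add, thetaExp_add, mul_assoc]

variable {τ : ℂ}

theorem summable_thetaExp_two_mul_add_sq (hτ : 0 < τ.im) (r : ℤ) :
    Summable fun n : ℤ => thetaExp τ ((2 * n + r) ^ 2) := by
  have h := ((summable_jacobiTheta₂_term_iff (r * τ / 2) τ).mpr hτ).mul_left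
    (cexp (Real.pi * I * τ * r ^ 2 / 4))
  refine h.congr fun n => ?_
  rw [jacobiTheta₂_term, thetaExp, ← Complex.exp_add]
  push_cast
  ring_nf

theorem summable_thetaExp_two_mul_sq (hτ : 0 < τ.im) :
    Summable fun n : ℤ => thetaExp τ ((2 * n) ^ 2) := by
  simpa using summable_thetaExp_two_mul_add_sq hτ 0

theorem hasSum_theta3_pow_four (hτ : 0 < τ.im) :
    HasSum (fun z : Quad => thetaExp τ (2 * z).sumSq) (theta3 τ ^ 4) := by
  have hterm (n : ℤ) : cexp (Real.pi * I * τ * (n : ℂ) ^ 2) = thetaExp τ ((2 * n) ^ 2) := by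
    rw [thetaExp]
    push_cast
    ring_nf
  rw [theta3, tsum_congr hterm]
  refine (hasSum_pow_four (summable_thetaExp_two_mul_sq hτ).norm).congr_fun fun z => ?_
  simp only [thetaExp_sumSq, Prod.fst_mul, Prod.snd_mul, Prod.fst_ofNat, Prod.snd_ofNat]

theorem hasSum_theta4_pow_four (hτ : 0 < τ.im) :
    HasSum (fun z : Quad => (-1 : ℂ) ^ z.sum * thetaExp τ (2 * z).sumSq) (theta4 τ ^ 4) := by
  have hterm (n : ℤ) : (-1 : ℂ) ^ n * cexp (Real.pi * I * τ * (n : ℂ) ^ 2) =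
      (-1 : ℂ) ^ n * thetaExp τ ((2 * n) ^ 2) := by
    rw [thetaExp]
    push_cast
    ring_nf
  have hs : Summable fun n : ℤ => ‖(-1 : ℂ) ^ n * thetaExp τ ((2 * n) ^ 2)‖ :=
    (summable_thetaExp_two_mul_sq hτ).norm.congr fun n => by simp
  rw [theta4, tsum_congr hterm]
  refine (hasSum_pow_four hs).congr_fun fun z => ?_
  have hne : (-1 : ℂ) ≠ 0 := by norm_num
  simp only [thetaExp_sumSq, Quad.sum, zpow_add₀ hne, Prod.fst_mul, Prod.snd_mul, Prod.fst_ofNat,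
    Prod.snd_ofNat]
  ring

theorem hasSum_theta2_pow_four (hτ : 0 < τ.im) :
    HasSum (fun x : Quad => thetaExp τ (2 * x + 1).sumSq) (theta2 τ ^ 4) := by
  have hterm (n : ℤ) :
      cexp (Real.pi * I * τ * ((n : ℂ) + 1 / 2) ^ 2) = thetaExp τ ((2 * n + 1) ^ 2) := by
    rw [thetaExp]
    push_cast
    ring_nf
  rw [theta2, tsum_congr hterm]
  refine (hasSum_pow_four (summable_thetaExp_two_mul_add_sq hτ 1).norm).congr_fun fun x => ?_
  simp only [thetaExp_sumSq, Prod.fst_add, Prod.snd_add, Prod.fst_mul, Prod.snd_mul,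
    Prod.fst_ofNat, Prod.snd_ofNat, Prod.fst_one, Prod.snd_one]

/-- Jacobi's identity: `θ₂(τ)⁴ + θ₄(τ)⁴ = θ₃(τ)⁴` for all `τ` in the upper half-plane. -/
theorem jacobi_theta_fourth_power_identity (τ : ℂ) (hτ : 0 < τ.im) :
    theta2 τ ^ 4 + theta4 τ ^ 4 = theta3 τ ^ 4 := by
  have h2 := hasSum_theta2_pow_four hτ
  have h3 := hasSum_theta3_pow_four hτ
  have h4 := hasSum_theta4_pow_four hτ
  have hodd := tsum_sub_tsum_neg_one_zpow_mul Quad.sum h3.summable h4.summable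
  have hhalf := Quad.tsum_sumSq_two_mul_add_one h2.summable
  rw [h3.tsum_eq, h4.tsum_eq] at hodd
  rw [h2.tsum_eq, two_nsmul, ← two_mul] at hhalf
  linear_combination hhalf - hodd
end
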